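/- Assume lim_{N→∞} d_U(A_N, A) = 0. Then for every function f : ℝ^r → ℝ of class C¹ and every T > 0, both sup_{N ≥ 1} sup_{0 ≤ t ≤ T} sup_{p ∈ K_N} | N·(S_{N,[Nt]} f(p) − f(p)) | < ∞ and lim_{N→∞} sup_{0 ≤ t ≤ T} sup_{p ∈ K_N} | S_{N,[Nt]} f(p) − f(p) | = 0 hold. -/

import Mathlib

open scoped BigOperators NNReal
open Finset MeasureTheory

noncomputable section

/-- A Q-matrix: nonnegative off-diagonal entries, rows summing to zero. -/
def IsQMatrix {r : ℕ} (M : Matrix (Fin r) (Fin r) ℝ) : Prop :=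
  (∀ i j, i ≠ j → 0 ≤ M i j) ∧ ∀ i, ∑ j, M i j = 0

/-- A stochastic matrix: nonnegative entries, rows summing to one. -/
def IsStochastic {r : ℕ} (M : Matrix (Fin r) (Fin r) ℝ) : Prop :=
  (∀ i j, 0 ≤ M i j) ∧ ∀ i, ∑ j, M i j = 1

/-- Frobenius norm of an `r×r` real matrix. -/
def frobNorm {r : ℕ} (M : Matrix (Fin r) (Fin r) ℝ) : ℝ :=
  Real.sqrt (∑ i, ∑ j, (M i j) ^ 2)

/-- The metric `d_U(x,y) = ∫₀^∞ e^{-u} sup_{0≤t≤u} (‖x(t)−y(t)‖ ∧ 1) du` on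
matrix-valued paths. -/
def dU {r : ℕ} (x y : ℝ → Matrix (Fin r) (Fin r) ℝ) : ℝ :=
  ∫ u in Set.Ioi (0 : ℝ),
    Real.exp (-u) * sSup ((fun t => min (frobNorm (x t - y t)) 1) '' Set.Icc 0 u)

/-- Multinomial probability weight `(∑β)!/∏ β_j! · ∏ p_j^{β_j}`. -/
def multinomialWeight {r : ℕ} (p : Fin r → ℝ) (β : Fin r → ℕ) : ℝ :=
  (Nat.multinomial Finset.univ β : ℝ) * ∏ j, p j ^ β j

/-- The internal-dynamics transition operator: `SOp N P f n = S_{N} f(n/N)`, where each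
of the `n i` agents of type `i` independently moves to type `j` with probability `P i j`,
the sum running over all arrays `ξ ∈ ℤ₊^{r×r}` whose `i`-th row sums to `n i`. -/
def SOp {r : ℕ} (N : ℕ) (P : Matrix (Fin r) (Fin r) ℝ) (f : (Fin r → ℝ) → ℝ)
    (n : Fin r → ℕ) : ℝ :=
  ∑ ξ ∈ Fintype.piFinset fun i => Finset.Nat.antidiagonalTuple r (n i),
    (∏ i, multinomialWeight (P i) (ξ i)) * f fun j => ((∑ i, ξ i j : ℕ) : ℝ) / N

/-- The multinomial-sampling operator `T_N f(p) = E[f(M/N)]`, `M ~ multinomial(N,p)`. -/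
def TOp {r : ℕ} (N : ℕ) (f : (Fin r → ℝ) → ℝ) (p : Fin r → ℝ) : ℝ :=
  ∑ α ∈ Finset.Nat.antidiagonalTuple r N,
    multinomialWeight p α * f fun i => (α i : ℝ) / N

/-- One-step operator of internal dynamics followed by multinomial sampling:
`U_{N,k} f = S_{N,k}(T_N f)`. -/
def UOp {r : ℕ} (N : ℕ) (P : Matrix (Fin r) (Fin r) ℝ) (f : (Fin r → ℝ) → ℝ)
    (n : Fin r → ℕ) : ℝ :=
  SOp N P (TOp N f) n

/-- The first-order generator `G_A(t) f(p) = ∑_{i,j} pᵢ aᵢⱼ(t) ∂f/∂xⱼ(p)`,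
here taking the matrix `A(t)` as argument. -/
def GA {r : ℕ} (M : Matrix (Fin r) (Fin r) ℝ) (f : (Fin r → ℝ) → ℝ) (p : Fin r → ℝ) : ℝ :=
  ∑ i, ∑ j, p i * M i j * fderiv ℝ f p (Pi.single j 1)

/-- The Wright–Fisher generator
`G_B f(p) = (1/2) ∑_{i,j} pᵢ(δᵢⱼ − pⱼ) ∂²f/∂xᵢ∂xⱼ(p)`. -/
def GB {r : ℕ} (f : (Fin r → ℝ) → ℝ) (p : Fin r → ℝ) : ℝ :=
  (1 / 2) * ∑ i, ∑ j,
    p i * ((if i = j then (1 : ℝ) else 0) - p j) *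
      fderiv ℝ (fun x => fderiv ℝ f x (Pi.single j 1)) p (Pi.single i 1)

/-!
An agent that keeps its type leaves the empirical distribution `n / N` unchanged, and an agent
that moves changes it by `2 / N` in `ℓ¹`. As `f` is Lipschitz on `[0, 1]ʳ`, `|S f - f|` at `n / N`
is at most `2 Lip(f) / N` times the expected number of moving agents
`∑ i, nᵢ (1 - Pᵢᵢ) = -(1 / N) ∑ i, nᵢ aᵢᵢ ≤ max |aᵢⱼ|`, so `N |S f - f| ≤ 2 Lip(f) ‖A_N(s)‖`.
These norms are bounded uniformly in `N ≥ 1` and `s ≤ T`: the `d_U`-integrand is at least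
`e⁻ᵘ (‖A_N(s) - A(s)‖ ∧ 1)` for `u ≥ s`, so `d_U(A_N, A) → 0` forces `‖A_N - A‖ < 1` on `[0, T]`
for large `N`, while each step function `A_N` takes finitely many values on `[0, T]`.
-/

open Filter Topology

variable {r : ℕ}

theorem sum_multinomialWeight (p : Fin r → ℝ) (n : ℕ) :
    ∑ β ∈ Nat.antidiagonalTuple r n, multinomialWeight p β = (∑ j, p j) ^ n := by
  rw [← piAntidiag_univ_fin_eq_antidiagonalTuple, sum_pow_eq_sum_piAntidiag]
  rfl

theorem multinomialWeight_nonneg {p : Fin r → ℝ} (hp : ∀ j, 0 ≤ p j) (β : Fin r → ℕ) :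
    0 ≤ multinomialWeight p β :=
  mul_nonneg (Nat.cast_nonneg _) (prod_nonneg fun j _ => pow_nonneg (hp j) _)

theorem sum_multinomialWeight_mul_apply (p : Fin r → ℝ) (n : ℕ) (j : Fin r) :
    ∑ β ∈ Nat.antidiagonalTuple r n, multinomialWeight p β * β j
      = n * p j * (∑ l, p l) ^ (n - 1) := by
  set c : (Fin r → ℕ) → ℝ :=
    fun β => Nat.multinomial univ β * ∏ l ∈ univ.erase j, p l ^ β l
  set s := ∑ l ∈ univ.erase j, p l
  have hweight : ∀ x β, multinomialWeight (Function.update p j x) β = c β * x ^ β j := by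
    intro x β
    rw [multinomialWeight, ← mul_prod_erase univ _ (mem_univ j), Function.update_self,
      prod_congr rfl fun l hl => by rw [Function.update_of_ne (ne_of_mem_erase hl)]]
    ring
  -- differentiate `x ↦ ∑ β, c β * x ^ β j = (x + s) ^ n` at `x = p j`
  have hpoly :
      (fun x => ∑ β ∈ Nat.antidiagonalTuple r n, c β * x ^ β j) = fun x => (x + s) ^ n := by
    ext x
    simp_rw [← hweight, sum_multinomialWeight, sum_update_of_mem (mem_univ j),
      sdiff_singleton_eq_erase]
    rfl
  have hderiv : HasDerivAt (fun x => ∑ β ∈ Nat.antidiagonalTuple r n, c β * x ^ β j)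
      (∑ β ∈ Nat.antidiagonalTuple r n, c β * (β j * p j ^ (β j - 1))) (p j) :=
    HasDerivAt.fun_sum fun β _ => (hasDerivAt_pow (β j) (p j)).const_mul (c β)
  rw [hpoly] at hderiv
  have hsum : p j + s = ∑ l, p l := add_sum_erase univ p (mem_univ j)
  have key := hderiv.unique (((hasDerivAt_id (p j)).add_const s).pow n)
  simp only [id, mul_one, hsum] at key
  calc ∑ β ∈ Nat.antidiagonalTuple r n, multinomialWeight p β * β j
      = p j * ∑ β ∈ Nat.antidiagonalTuple r n, c β * (β j * p j ^ (β j - 1)) := by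
        rw [mul_sum]
        refine sum_congr rfl fun β _ => ?_
        rw [← Function.update_eq_self j p, hweight, Function.update_self]
        rcases Nat.eq_zero_or_pos (β j) with h | h
        · simp [h]
        · rw [← Nat.sub_add_cancel h, pow_succ]; push_cast; ring
    _ = n * p j * (∑ l, p l) ^ (n - 1) := by rw [key]; ring

theorem Finset.sum_piFinset_prod_mul_apply {ι κ R : Type*} [Fintype ι] [DecidableEq ι]
    [CommSemiring R] (s : ι → Finset κ) (w : ι → κ → R) (g : κ → R) (i : ι)
    (hw : ∀ l ≠ i, ∑ β ∈ s l, w l β = 1) :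
    ∑ ξ ∈ Fintype.piFinset s, (∏ l, w l (ξ l)) * g (ξ i) = ∑ β ∈ s i, w i β * g β := by
  set w' := Function.update w i fun β => w i β * g β
  have hw'i : w' i = fun β => w i β * g β := Function.update_self ..
  have hw'l : ∀ l ∈ univ.erase i, w' l = w l := fun l hl =>
    Function.update_of_ne (ne_of_mem_erase hl) ..
  have hprod : ∀ ξ : ι → κ, ∏ l, w' l (ξ l) = (∏ l, w l (ξ l)) * g (ξ i) := by
    intro ξ
    rw [← mul_prod_erase univ _ (mem_univ i), ← mul_prod_erase univ (fun l => w l (ξ l))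
      (mem_univ i), hw'i, prod_congr rfl fun l hl => by rw [hw'l l hl]]
    ring
  rw [← sum_congr rfl fun ξ _ => hprod ξ, ← prod_univ_sum, ← mul_prod_erase univ _ (mem_univ i),
    hw'i, prod_eq_one fun l hl => by rw [hw'l l hl, hw l (ne_of_mem_erase hl)], mul_one]

section Transition

/-- The probability that, from the population `n`, exactly `ξ i j` agents move from type `i`
to type `j`. -/
def transitionWeight (P : Matrix (Fin r) (Fin r) ℝ) (ξ : Fin r → Fin r → ℕ) : ℝ :=
  ∏ i, multinomialWeight (P i) (ξ i)

theorem transitionWeight_nonneg {P : Matrix (Fin r) (Fin r) ℝ} (hP : ∀ i j, 0 ≤ P i j)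
    (ξ : Fin r → Fin r → ℕ) : 0 ≤ transitionWeight P ξ :=
  prod_nonneg fun i _ => multinomialWeight_nonneg (hP i) (ξ i)

variable {P : Matrix (Fin r) (Fin r) ℝ} (hP : ∀ i, ∑ j, P i j = 1) (n : Fin r → ℕ)
include hP

theorem sum_transitionWeight :
    ∑ ξ ∈ Fintype.piFinset fun i => Nat.antidiagonalTuple r (n i), transitionWeight P ξ = 1 := by
  simp [transitionWeight, ← prod_univ_sum, sum_multinomialWeight, hP]

theorem sum_transitionWeight_mul_apply (i j : Fin r) :
    ∑ ξ ∈ Fintype.piFinset (fun i => Nat.antidiagonalTuple r (n i)),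
      transitionWeight P ξ * ξ i j = n i * P i j := by
  refine (sum_piFinset_prod_mul_apply _ (fun l β => multinomialWeight (P l) β) (fun β => (β j : ℝ))
    i fun l _ => ?_).trans ?_
  · rw [sum_multinomialWeight, hP, one_pow]
  · rw [sum_multinomialWeight_mul_apply, hP, one_pow, mul_one]

end Transition

theorem sum_abs_sum_apply_sub_sum_le {ι : Type*} [Fintype ι] (x : ι → ι → ℝ)
    (hx : ∀ i j, 0 ≤ x i j) :
    ∑ j, |∑ i, x i j - ∑ k, x j k| ≤ 2 * ∑ i, (∑ j, x i j - x i i) := by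
  have hdiag_le : ∀ j, x j j ≤ ∑ i, x i j ∧ x j j ≤ ∑ k, x j k := fun j =>
    ⟨single_le_sum (f := (x · j)) (fun i _ => hx i j) (mem_univ j),
      single_le_sum (fun k _ => hx j k) (mem_univ j)⟩
  have hcol : ∑ j, (∑ i, x i j - x j j) = ∑ i, (∑ j, x i j - x i i) := by
    rw [sum_sub_distrib, sum_sub_distrib, sum_comm]
  calc ∑ j, |∑ i, x i j - ∑ k, x j k|
      ≤ ∑ j, ((∑ i, x i j - x j j) + (∑ k, x j k - x j j)) := by
        gcongr with j
        rw [abs_le]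
        constructor <;> linarith [hdiag_le j]
    _ = 2 * ∑ i, (∑ j, x i j - x i i) := by rw [sum_add_distrib, hcol]; ring

theorem norm_le_sum_abs {ι : Type*} [Fintype ι] (x : ι → ℝ) : ‖x‖ ≤ ∑ i, |x i| :=
  (pi_norm_le_iff_of_nonneg (sum_nonneg fun i _ => abs_nonneg (x i))).2 fun i =>
    single_le_sum (f := fun i => |x i|) (fun i _ => abs_nonneg (x i)) (mem_univ i)

theorem abs_transfer_sub_le {N : ℕ} {f : (Fin r → ℝ) → ℝ} {K : ℝ≥0}
    (hf : LipschitzOnWith K f (Set.Icc 0 1)) {n : Fin r → ℕ} (hn : ∑ i, n i = N)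
    {ξ : Fin r → Fin r → ℕ} (hrow : ∀ i, ∑ j, ξ i j = n i) :
    |f (fun j => ((∑ i, ξ i j : ℕ) : ℝ) / N) - f (fun i => (n i : ℝ) / N)|
      ≤ 2 * K / N * ∑ i, ((n i : ℝ) - ξ i i) := by
  have hmem : ∀ m : Fin r → ℕ, (∀ j, m j ≤ N) → (fun j => (m j : ℝ) / N) ∈ Set.Icc 0 1 :=
    fun m hm => ⟨fun j => by positivity, fun j => div_le_one_of_le₀ (Nat.cast_le.2 (hm j))
      (Nat.cast_nonneg N)⟩
  have hn_le : ∀ j, n j ≤ N := fun j => hn ▸ single_le_sum (fun i _ => Nat.zero_le _) (mem_univ j)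
  have hcol_le : ∀ j, ∑ i, ξ i j ≤ N := fun j => hn ▸
    sum_le_sum fun i _ => hrow i ▸ single_le_sum (fun k _ => Nat.zero_le _) (mem_univ j)
  have hcast : ∀ i, (n i : ℝ) = ∑ k, (ξ i k : ℝ) := fun i => by
    rw [← hrow i]; push_cast; rfl
  calc _ ≤ K * dist (fun j => ((∑ i, ξ i j : ℕ) : ℝ) / N) (fun i => (n i : ℝ) / N) := by
        rw [← Real.dist_eq]; exact hf.dist_le_mul _ (hmem _ hcol_le) _ (hmem n hn_le)
    _ ≤ K * ∑ j, |((∑ i, ξ i j : ℕ) : ℝ) / N - (n j : ℝ) / N| := by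
        gcongr; exact norm_le_sum_abs _
    _ = K / N * ∑ j, |∑ i, (ξ i j : ℝ) - ∑ k, (ξ j k : ℝ)| := by
        simp only [← hcast, ← sub_div, abs_div, Nat.abs_cast, ← sum_div]
        push_cast
        ring
    _ ≤ K / N * (2 * ∑ i, (∑ k, (ξ i k : ℝ) - ξ i i)) := by
        gcongr
        exact sum_abs_sum_apply_sub_sum_le _ fun i j => Nat.cast_nonneg _
    _ = 2 * K / N * ∑ i, ((n i : ℝ) - ξ i i) := by simp only [← hcast]; ring

theorem abs_SOp_sub_le {N : ℕ} {P : Matrix (Fin r) (Fin r) ℝ} (hP : IsStochastic P)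
    {f : (Fin r → ℝ) → ℝ} {K : ℝ≥0} (hf : LipschitzOnWith K f (Set.Icc 0 1))
    {n : Fin r → ℕ} (hn : ∑ i, n i = N) :
    |SOp N P f n - f (fun i => (n i : ℝ) / N)| ≤ 2 * K / N * ∑ i, n i * (1 - P i i) := by
  set D := Fintype.piFinset fun i => Nat.antidiagonalTuple r (n i)
  set p₀ : Fin r → ℝ := fun i => (n i : ℝ) / N
  have hS : SOp N P f n - f p₀ = ∑ ξ ∈ D,
      transitionWeight P ξ * (f (fun j => ((∑ i, ξ i j : ℕ) : ℝ) / N) - f p₀) := by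
    simp only [mul_sub, sum_sub_distrib, ← sum_mul]
    rw [sum_transitionWeight hP.2, one_mul]
    rfl
  have hexpect : ∑ ξ ∈ D, transitionWeight P ξ * ∑ i, ((n i : ℝ) - ξ i i)
      = ∑ i, n i * (1 - P i i) := by
    simp only [mul_sum, mul_sub]
    rw [sum_comm]
    refine sum_congr rfl fun i _ => ?_
    rw [sum_sub_distrib, ← sum_mul, sum_transitionWeight hP.2, sum_transitionWeight_mul_apply hP.2]
    ring
  rw [hS, ← hexpect, mul_sum]
  refine (abs_sum_le_sum_abs _ _).trans (sum_le_sum fun ξ hξ => ?_)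
  rw [abs_mul, abs_of_nonneg (transitionWeight_nonneg hP.1 ξ), mul_left_comm]
  exact mul_le_mul_of_nonneg_left (abs_transfer_sub_le hf hn fun i =>
    Nat.mem_antidiagonalTuple.1 (Fintype.mem_piFinset.1 hξ i)) (transitionWeight_nonneg hP.1 ξ)

-- the entrywise sup norm
attribute [local instance] Matrix.normedAddCommGroup

theorem natCast_mul_abs_SOp_sub_le {N : ℕ} {a : Matrix (Fin r) (Fin r) ℝ}
    (hP : IsStochastic (1 + (N : ℝ)⁻¹ • a)) {f : (Fin r → ℝ) → ℝ} {K : ℝ≥0}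
    (hf : LipschitzOnWith K f (Set.Icc 0 1)) {n : Fin r → ℕ} (hn : ∑ i, n i = N) :
    N * |SOp N (1 + (N : ℝ)⁻¹ • a) f n - f (fun i => (n i : ℝ) / N)| ≤ 2 * K * ‖a‖ := by
  rcases N.eq_zero_or_pos with rfl | hN
  · simp only [CharP.cast_eq_zero, zero_mul]
    positivity
  have hmoved : ∑ i, n i * (1 - (1 + (N : ℝ)⁻¹ • a) i i) ≤ ‖a‖ :=
    calc ∑ i, n i * (1 - (1 + (N : ℝ)⁻¹ • a) i i) = (N : ℝ)⁻¹ * ∑ i, n i * -a i i := by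
          simp only [Matrix.add_apply, Matrix.one_apply_eq, Matrix.smul_apply, smul_eq_mul,
            mul_sum]
          exact sum_congr rfl fun i _ => by ring
      _ ≤ (N : ℝ)⁻¹ * ∑ i, n i * ‖a‖ := by
          gcongr with i
          exact (neg_le_abs _).trans (Matrix.norm_entry_le_entrywise_sup_norm a)
      _ = ‖a‖ := by
          rw [← sum_mul, ← Nat.cast_sum, hn, ← mul_assoc, inv_mul_cancel₀ (by positivity), one_mul]
  calc (N : ℝ) * |SOp N (1 + (N : ℝ)⁻¹ • a) f n - f (fun i => (n i : ℝ) / N)|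
      ≤ N * (2 * K / N * ∑ i, n i * (1 - (1 + (N : ℝ)⁻¹ • a) i i)) := by
        gcongr; exact abs_SOp_sub_le hP hf hn
    _ = 2 * K * ∑ i, n i * (1 - (1 + (N : ℝ)⁻¹ • a) i i) := by field_simp
    _ ≤ 2 * K * ‖a‖ := by gcongr

theorem mul_exp_neg_le_integral_exp_neg_mul_sSup {φ : ℝ → ℝ} (hφ0 : ∀ t, 0 ≤ φ t)
    (hφ1 : ∀ t, φ t ≤ 1) {s u : ℝ} (hs : 0 ≤ s) (hsu : s ≤ u) :
    φ s * Real.exp (-u) ≤ ∫ v in Set.Ioi 0, Real.exp (-v) * sSup (φ '' Set.Icc 0 v) := by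
  set g : ℝ → ℝ := fun v => sSup (φ '' Set.Icc 0 v)
  have hbdd : ∀ v, BddAbove (φ '' Set.Icc 0 v) := fun v =>
    ⟨1, Set.forall_mem_image.2 fun t _ => hφ1 t⟩
  have hg0 : ∀ v, 0 ≤ g v := fun v => Real.sSup_nonneg (Set.forall_mem_image.2 fun t _ => hφ0 t)
  have hg1 : ∀ v, g v ≤ 1 := fun v => Real.sSup_le (Set.forall_mem_image.2 fun t _ => hφ1 t)
    zero_le_one
  have hmono : Monotone g := fun v w hvw => Real.sSup_le (fun x hx => le_csSup (hbdd w)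
    (Set.image_mono (Set.Icc_subset_Icc_right hvw) hx)) (hg0 w)
  have hint : IntegrableOn (fun v => Real.exp (-v) * g v) (Set.Ioi 0) := by
    refine (integrableOn_exp_neg_Ioi 0).mono'
      ((Real.continuous_exp.comp continuous_neg).measurable.mul
        hmono.measurable).aestronglyMeasurable
      (Eventually.of_forall fun v => ?_)
    rw [norm_mul, Real.norm_of_nonneg (Real.exp_pos _).le, Real.norm_of_nonneg (hg0 v)]
    exact mul_le_of_le_one_right (Real.exp_pos _).le (hg1 v)
  calc φ s * Real.exp (-u) = ∫ v in Set.Ioi u, Real.exp (-v) * φ s := by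
        rw [integral_mul_const, integral_exp_neg_Ioi, mul_comm]
    _ ≤ ∫ v in Set.Ioi u, Real.exp (-v) * g v :=
        setIntegral_mono_on ((integrableOn_exp_neg_Ioi u).mul_const _)
          (hint.mono_set (Set.Ioi_subset_Ioi (hs.trans hsu))) measurableSet_Ioi fun v hv =>
            mul_le_mul_of_nonneg_left (le_csSup (hbdd v) ⟨s, ⟨hs, hsu.trans hv.le⟩, rfl⟩)
              (Real.exp_pos _).le
    _ ≤ ∫ v in Set.Ioi 0, Real.exp (-v) * g v :=
        setIntegral_mono_set hint (ae_of_all _ fun v => mul_nonneg (Real.exp_pos _).le (hg0 v))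
          (Set.Ioi_subset_Ioi (hs.trans hsu)).eventuallyLE

theorem min_frobNorm_mul_exp_neg_le_dU (x y : ℝ → Matrix (Fin r) (Fin r) ℝ) {s u : ℝ}
    (hs : 0 ≤ s) (hsu : s ≤ u) : min (frobNorm (x s - y s)) 1 * Real.exp (-u) ≤ dU x y :=
  mul_exp_neg_le_integral_exp_neg_mul_sSup (φ := fun t => min (frobNorm (x t - y t)) 1)
    (fun _ => le_min (Real.sqrt_nonneg _) zero_le_one)
    (fun _ => min_le_right _ _) hs hsu

theorem eventually_frobNorm_sub_lt_one {A : ℕ → ℝ → Matrix (Fin r) (Fin r) ℝ}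
    {Alim : ℝ → Matrix (Fin r) (Fin r) ℝ} (hconv : Tendsto (fun N => dU (A N) Alim) atTop (𝓝 0))
    (T : ℝ) : ∀ᶠ N in atTop, ∀ s ∈ Set.Icc 0 T, frobNorm (A N s - Alim s) < 1 := by
  filter_upwards [hconv.eventually (gt_mem_nhds (Real.exp_pos (-T)))] with N hN s hs
  by_contra! hfar
  have := min_frobNorm_mul_exp_neg_le_dU (A N) Alim hs.1 hs.2
  rw [min_eq_right hfar, one_mul] at this
  linarith

theorem norm_le_frobNorm (M : Matrix (Fin r) (Fin r) ℝ) : ‖M‖ ≤ frobNorm M :=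
  (Matrix.norm_le_iff (Real.sqrt_nonneg _)).2 fun i j => Real.abs_le_sqrt <|
    (single_le_sum (f := fun j => M i j ^ 2) (fun _ _ => sq_nonneg _) (mem_univ j)).trans <|
      single_le_sum (f := fun i => ∑ j, M i j ^ 2) (fun _ _ => sum_nonneg fun _ _ => sq_nonneg _)
        (mem_univ i)

theorem finite_image_Icc_of_eq_on_steps {α : Type*} {F : ℝ → α} {N : ℕ} (hN : 1 ≤ N)
    (hF : ∀ k : ℕ, ∀ t : ℝ, (k : ℝ) / N ≤ t → t < ((k : ℝ) + 1) / N → F t = F ((k : ℝ) / N))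
    (T : ℝ) : (F '' Set.Icc 0 T).Finite := by
  have hN₀ : (0 : ℝ) < N := by exact_mod_cast hN
  refine ((range (⌊(N : ℝ) * T⌋₊ + 1)).finite_toSet.image fun k : ℕ => F (k / N)).subset ?_
  rintro _ ⟨t, ⟨ht0, htT⟩, rfl⟩
  refine ⟨⌊(N : ℝ) * t⌋₊, mem_range.2 (Nat.lt_succ_of_le (Nat.floor_le_floor (by gcongr))),
    (hF _ t ?_ ?_).symm⟩
  · rw [div_le_iff₀ hN₀, mul_comm]
    exact Nat.floor_le (by positivity)
  · rw [lt_div_iff₀ hN₀, mul_comm]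
    exact Nat.lt_floor_add_one _

theorem exists_norm_le_of_eventually_dist_le {α E : Type*} [SeminormedAddCommGroup E]
    {F : ℕ → α → E} {G : α → E} {S : Set α} {δ : ℝ}
    (hF : ∀ N, 1 ≤ N → Bornology.IsBounded (F N '' S))
    (hFG : ∀ᶠ N in atTop, ∀ s ∈ S, dist (F N s) (G s) ≤ δ) :
    ∃ B, ∀ N, 1 ≤ N → ∀ s ∈ S, ‖F N s‖ ≤ B := by
  obtain ⟨N₀, hN₀⟩ := (hFG.and (eventually_ge_atTop 1)).exists_forall_of_atTop
  obtain ⟨B₀, hB₀⟩ := isBounded_iff_forall_norm_le.1 (hF N₀ (hN₀ N₀ le_rfl).2)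
  obtain ⟨B₁, hB₁⟩ := isBounded_iff_forall_norm_le.1 <|
    (Bornology.isBounded_biUnion_finset (Finset.Icc 1 N₀)).2 fun N hN =>
      hF N (Finset.mem_Icc.1 hN).1
  refine ⟨max B₁ (B₀ + 2 * δ), fun N hN s hs => ?_⟩
  rcases le_total N N₀ with hle | hge
  · exact le_max_of_le_left <| hB₁ _ <| Set.mem_biUnion (Finset.mem_Icc.2 ⟨hN, hle⟩) ⟨s, hs, rfl⟩
  · refine le_max_of_le_right ?_
    calc ‖F N s‖ ≤ ‖F N₀ s‖ + dist (F N s) (F N₀ s) := by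
          rw [dist_eq_norm]; exact norm_le_norm_add_norm_sub' _ _
      _ ≤ B₀ + (δ + δ) := add_le_add (hB₀ _ ⟨s, hs, rfl⟩) <|
          (dist_triangle_right _ _ (G s)).trans <|
            add_le_add ((hN₀ N hge).1 s hs) ((hN₀ N₀ le_rfl).1 s hs)
      _ = B₀ + 2 * δ := by ring

theorem exists_norm_le_of_tendsto_dU {A : ℕ → ℝ → Matrix (Fin r) (Fin r) ℝ}
    {Alim : ℝ → Matrix (Fin r) (Fin r) ℝ}
    (hstep : ∀ N : ℕ, 1 ≤ N → ∀ k : ℕ, ∀ t : ℝ,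
      (k : ℝ) / N ≤ t → t < ((k : ℝ) + 1) / N → A N t = A N ((k : ℝ) / N))
    (hconv : Tendsto (fun N => dU (A N) Alim) atTop (𝓝 0)) (T : ℝ) :
    ∃ B, ∀ N, 1 ≤ N → ∀ s ∈ Set.Icc 0 T, ‖A N s‖ ≤ B :=
  exists_norm_le_of_eventually_dist_le (δ := 1) (G := Alim)
    (fun N hN => (finite_image_Icc_of_eq_on_steps hN (hstep N hN) T).isBounded)
    ((eventually_frobNorm_sub_lt_one hconv T).mono fun _ h s hs =>
      (norm_le_frobNorm _).trans (h s hs).le)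

theorem internal_dynamics_increment_bound_C1_general
    (r : ℕ)
    (A : ℕ → ℝ → Matrix (Fin r) (Fin r) ℝ)
    (Alim : ℝ → Matrix (Fin r) (Fin r) ℝ)
    (hstepwise : ∀ N : ℕ, 1 ≤ N → ∀ k : ℕ, ∀ t : ℝ,
      (k : ℝ) / N ≤ t → t < ((k : ℝ) + 1) / N → A N t = A N ((k : ℝ) / N))
    (hstoch : ∀ N : ℕ, 1 ≤ N → ∀ k : ℕ,
      IsStochastic (1 + ((N : ℝ))⁻¹ • A N ((k : ℝ) / N)))
    (hconv : Filter.Tendsto (fun N => dU (A N) Alim) Filter.atTop (nhds 0))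
    (f : (Fin r → ℝ) → ℝ) (hf : ContDiff ℝ 1 f) (T : ℝ) :
    (∃ C : ℝ, ∀ N : ℕ, 1 ≤ N → ∀ t : ℝ, 0 ≤ t → t ≤ T →
      ∀ n : Fin r → ℕ, ∑ i, n i = N →
        |(N : ℝ) * (SOp N (1 + ((N : ℝ))⁻¹ • A N ((⌊(N : ℝ) * t⌋₊ : ℝ) / N)) f n
              - f fun i => (n i : ℝ) / N)| ≤ C) ∧
    (∀ ε > 0, ∃ N₀ : ℕ, ∀ N : ℕ, N₀ ≤ N → 1 ≤ N → ∀ t : ℝ, 0 ≤ t → t ≤ T →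
      ∀ n : Fin r → ℕ, ∑ i, n i = N →
        |SOp N (1 + ((N : ℝ))⁻¹ • A N ((⌊(N : ℝ) * t⌋₊ : ℝ) / N)) f n
              - f (fun i => (n i : ℝ) / N)| < ε) := by
  obtain ⟨K, hK⟩ := hf.contDiffOn.exists_lipschitzOnWith one_ne_zero (convex_Icc 0 1) isCompact_Icc
  obtain ⟨B, hB⟩ := exists_norm_le_of_tendsto_dU hstepwise hconv T
  have hbound : ∀ N : ℕ, 1 ≤ N → ∀ t : ℝ, 0 ≤ t → t ≤ T → ∀ n : Fin r → ℕ, ∑ i, n i = N →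
      (N : ℝ) * |SOp N (1 + ((N : ℝ))⁻¹ • A N ((⌊(N : ℝ) * t⌋₊ : ℝ) / N)) f n
        - f fun i => (n i : ℝ) / N| ≤ 2 * K * B := by
    intro N hN t ht htT n hn
    have hN₀ : (0 : ℝ) < N := by exact_mod_cast hN
    have hgrid : (⌊(N : ℝ) * t⌋₊ : ℝ) / N ∈ Set.Icc 0 T :=
      ⟨by positivity, (div_le_iff₀ hN₀).2 <| (Nat.floor_le (by positivity)).trans <| by
        rw [mul_comm]; gcongr⟩
    refine (natCast_mul_abs_SOp_sub_le (hstoch N hN _) hK hn).trans ?_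
    gcongr
    exact hB N hN _ hgrid
  refine ⟨⟨2 * K * B, fun N hN t ht htT n hn => ?_⟩, fun ε hε => ?_⟩
  · rw [abs_mul, Nat.abs_cast]
    exact hbound N hN t ht htT n hn
  · obtain ⟨N₀, hN₀⟩ := exists_nat_gt (2 * K * B / ε)
    refine ⟨N₀, fun N hN₀N hN t ht htT n hn => lt_of_mul_lt_mul_left ?_ (Nat.cast_nonneg N)⟩
    calc _ ≤ 2 * K * B := hbound N hN t ht htT n hn
      _ < N * ε := (div_lt_iff₀ hε).1 (hN₀.trans_le (by exact_mod_cast hN₀N))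

/-- For every C¹ function `f` and `T > 0`: boundedness
`sup_(N≥1) sup_(0≤t≤T) sup_(p ∈ K_N) |N(S_(N,[Nt])f(p) − f(p))| < ∞` and convergence
`lim_N sup_(0≤t≤T) sup_(p ∈ K_N) |S_(N,[Nt])f(p) − f(p)| = 0`. -/
theorem internal_dynamics_increment_bound_C1
    (r : ℕ) (hr : 2 ≤ r)
    (A : ℕ → ℝ → Matrix (Fin r) (Fin r) ℝ)
    (Alim : ℝ → Matrix (Fin r) (Fin r) ℝ)
    (hQ : ∀ N : ℕ, 1 ≤ N → ∀ t : ℝ, 0 ≤ t → IsQMatrix (A N t))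
    (hstepwise : ∀ N : ℕ, 1 ≤ N → ∀ k : ℕ, ∀ t : ℝ,
      (k : ℝ) / N ≤ t → t < ((k : ℝ) + 1) / N → A N t = A N ((k : ℝ) / N))
    (hQlim : ∀ t : ℝ, 0 ≤ t → IsQMatrix (Alim t))
    (hcadlag_right : ∀ t : ℝ, 0 ≤ t → ContinuousWithinAt Alim (Set.Ici t) t)
    (hcadlag_left : ∀ t : ℝ, 0 < t →
      ∃ L, Filter.Tendsto Alim (nhdsWithin t (Set.Iio t)) (nhds L))
    (hstoch : ∀ N : ℕ, 1 ≤ N → ∀ k : ℕ,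
      IsStochastic (1 + ((N : ℝ))⁻¹ • A N ((k : ℝ) / N)))
    (hconv : Filter.Tendsto (fun N => dU (A N) Alim) Filter.atTop (nhds 0))
    (f : (Fin r → ℝ) → ℝ) (hf : ContDiff ℝ 1 f) (T : ℝ) (hT : 0 < T) :
    (∃ C : ℝ, ∀ N : ℕ, 1 ≤ N → ∀ t : ℝ, 0 ≤ t → t ≤ T →
      ∀ n : Fin r → ℕ, ∑ i, n i = N →
        |(N : ℝ) * (SOp N (1 + ((N : ℝ))⁻¹ • A N ((⌊(N : ℝ) * t⌋₊ : ℝ) / N)) f n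
              - f fun i => (n i : ℝ) / N)| ≤ C) ∧
    (∀ ε > 0, ∃ N₀ : ℕ, ∀ N : ℕ, N₀ ≤ N → 1 ≤ N → ∀ t : ℝ, 0 ≤ t → t ≤ T →
      ∀ n : Fin r → ℕ, ∑ i, n i = N →
        |SOp N (1 + ((N : ℝ))⁻¹ • A N ((⌊(N : ℝ) * t⌋₊ : ℝ) / N)) f n
              - f (fun i => (n i : ℝ) / N)| < ε) :=
  internal_dynamics_increment_bound_C1_general r A Alim hstepwise hstoch hconv f hf T
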